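/- The series ∑_{n=0}^∞ (1/4)^n · ((1/2)_n)^3/((1)_n)^3 · (6n+1) converges to 4/π. -/

import Mathlib

open Filter Real

noncomputable def poch (x : ℝ) : ℕ → ℝ
  | 0 => 1
  | n + 1 => poch x n * (x + n)

noncomputable def pochR (x k : ℝ) : ℝ := Real.Gamma (x + k) / Real.Gamma x

/-!
Guillera's Wilf–Zeilberger proof. With
`b(k, n) = (1/2)_n^3 (1/2)_k^2 / (n! (n+k)!^2 4^n)`, the pair `F(k, n) = (6n + 4k + 1) b(k, n)`,
`G(k, n) = 8n b(k, n)` satisfies `F(k+1, n) - F(k, n) = G(k, n+1) - G(k, n)`. Since `G(k, 0) = 0`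
and `G(k, n) → 0`, the sum `∑ₙ F(k, n)` does not depend on `k`; at `k = 0` it is the series. As
`k → ∞`, the terms with `n ≥ 1` are `O(4⁻ⁿ / k)`, while `F(k, 0) = (4k + 1) ((1/2)_k / k!)^2`
tends to `4/π` by Wallis' product.
-/

open Nat Topology

lemma poch_succ (x : ℝ) (n : ℕ) : poch x (n + 1) = poch x n * (x + n) := rfl

lemma poch_pos {x : ℝ} (hx : 0 < x) (n : ℕ) : 0 < poch x n := by
  induction n with
  | zero => exact one_pos
  | succ n ih => rw [poch_succ]; positivity

lemma poch_le_poch {x y : ℝ} (hx : 0 < x) (hxy : x ≤ y) (n : ℕ) : poch x n ≤ poch y n := by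
  induction n with
  | zero => rfl
  | succ n ih =>
    rw [poch_succ, poch_succ]
    exact mul_le_mul ih (by linarith) (by positivity) ((poch_pos hx n).le.trans ih)

lemma poch_one (n : ℕ) : poch 1 n = n ! := by
  induction n with
  | zero => simp [poch]
  | succ n ih => rw [poch_succ, ih, factorial_succ]; push_cast; ring

lemma poch_half_le_factorial (n : ℕ) : poch (1 / 2) n ≤ n ! :=
  poch_one n ▸ poch_le_poch (by norm_num) (by norm_num) n

lemma Nat.succ_le_add_choose {n : ℕ} (hn : 1 ≤ n) (k : ℕ) : k + 1 ≤ (n + k).choose k := by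
  simpa [add_comm 1 k, choose_succ_self_right] using choose_le_choose k (by omega : 1 + k ≤ n + k)

theorem Filter.Tendsto.sum_range_of_sub_eq_sub_succ {E : Type*} [AddCommGroup E]
    [TopologicalSpace E] [IsTopologicalAddGroup E] {f g G : ℕ → E} {s l : E}
    (hf : Tendsto (fun N ↦ ∑ n ∈ Finset.range N, f n) atTop (𝓝 s))
    (hfg : ∀ n, g n - f n = G (n + 1) - G n) (hG : Tendsto G atTop (𝓝 l)) :
    Tendsto (fun N ↦ ∑ n ∈ Finset.range N, g n) atTop (𝓝 (s + (l - G 0))) := by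
  have hsum (N : ℕ) : ∑ n ∈ Finset.range N, g n = ∑ n ∈ Finset.range N, f n + (G N - G 0) := by
    rw [← Finset.sum_range_sub, ← Finset.sum_add_distrib]
    exact Finset.sum_congr rfl fun n _ ↦ by rw [← hfg]; abel
  simpa only [hsum] using hf.add (hG.sub_const (G 0))

namespace Guillera

noncomputable def wzKernel (k n : ℕ) : ℝ :=
  poch (1 / 2) n ^ 3 * poch (1 / 2) k ^ 2 / (n ! * (n + k)! ^ 2 * 4 ^ n)

noncomputable def wzF (k n : ℕ) : ℝ := (6 * n + 4 * k + 1) * wzKernel k n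

noncomputable def wzG (k n : ℕ) : ℝ := 8 * n * wzKernel k n

lemma wzKernel_pos (k n : ℕ) : 0 < wzKernel k n := by
  have hn := poch_pos (x := 1 / 2) (by norm_num) n
  have hk := poch_pos (x := 1 / 2) (by norm_num) k
  unfold wzKernel
  positivity

lemma wzF_nonneg (k n : ℕ) : 0 ≤ wzF k n :=
  mul_nonneg (by positivity) (wzKernel_pos k n).le

lemma wzF_succ_sub_wzF (k n : ℕ) : wzF (k + 1) n - wzF k n = wzG k (n + 1) - wzG k n := by
  have hn := poch_pos (x := 1 / 2) (by norm_num) n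
  have hk := poch_pos (x := 1 / 2) (by norm_num) k
  unfold wzF wzG wzKernel
  rw [show n + (k + 1) = n + k + 1 by omega, show n + 1 + k = n + k + 1 by omega,
    poch_succ, poch_succ, factorial_succ, factorial_succ, pow_succ]
  push_cast
  field_simp
  ring

lemma choose_sq_mul_wzKernel_le (k n : ℕ) :
    ((n + k).choose k : ℝ) ^ 2 * wzKernel k n ≤ (1 / 4) ^ n := by
  have hn := poch_pos (x := 1 / 2) (by norm_num) n
  have hk := poch_pos (x := 1 / 2) (by norm_num) k
  have hfac : ((n + k)! : ℝ) = (n + k).choose k * n ! * k ! := by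
    exact_mod_cast (add_choose_mul_factorial_mul_factorial n k).symm
  have hc : (0 : ℝ) < (n + k).choose k := by exact_mod_cast choose_pos (by omega)
  have hrn : poch (1 / 2) n / n ! ≤ 1 :=
    div_le_one_of_le₀ (poch_half_le_factorial n) (by positivity)
  have hrk : poch (1 / 2) k / k ! ≤ 1 :=
    div_le_one_of_le₀ (poch_half_le_factorial k) (by positivity)
  calc ((n + k).choose k : ℝ) ^ 2 * wzKernel k n
      = (poch (1 / 2) n / n !) ^ 3 * (poch (1 / 2) k / k !) ^ 2 * (1 / 4) ^ n := by
        unfold wzKernel; rw [hfac, one_div_pow]; field_simp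
    _ ≤ 1 ^ 3 * 1 ^ 2 * (1 / 4) ^ n := by gcongr
    _ = (1 / 4) ^ n := by ring

lemma wzKernel_le (k n : ℕ) : wzKernel k n ≤ (1 / 4) ^ n := by
  have hc : (1 : ℝ) ≤ (n + k).choose k := by exact_mod_cast choose_pos (by omega)
  calc wzKernel k n ≤ ((n + k).choose k : ℝ) ^ 2 * wzKernel k n :=
        le_mul_of_one_le_left (wzKernel_pos k n).le (one_le_pow₀ hc)
    _ ≤ (1 / 4) ^ n := choose_sq_mul_wzKernel_le k n

lemma wzF_le {n : ℕ} (hn : 1 ≤ n) (k : ℕ) : wzF k n ≤ (6 * n + 1) * (1 / 4) ^ n / (k + 1) := by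
  have hc : (k + 1 : ℝ) ≤ (n + k).choose k := by exact_mod_cast succ_le_add_choose hn k
  have hkernel : (k + 1 : ℝ) ^ 2 * wzKernel k n ≤ (1 / 4) ^ n :=
    (mul_le_mul_of_nonneg_right (pow_le_pow_left₀ (by positivity) hc 2)
      (wzKernel_pos k n).le).trans (choose_sq_mul_wzKernel_le k n)
  have hcoeff : (6 * n + 4 * k + 1 : ℝ) ≤ (6 * n + 1) * (k + 1) := by
    have : (1 : ℝ) ≤ n := by exact_mod_cast hn
    nlinarith [(k.cast_nonneg : (0 : ℝ) ≤ k)]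
  rw [le_div_iff₀ (by positivity)]
  calc wzF k n * (k + 1) = (6 * n + 4 * k + 1) * ((k + 1) * wzKernel k n) := by
        unfold wzF; ring
    _ ≤ ((6 * n + 1) * (k + 1)) * ((k + 1) * wzKernel k n) := by
        gcongr; exact (mul_pos (by positivity) (wzKernel_pos k n)).le
    _ = (6 * n + 1) * ((k + 1) ^ 2 * wzKernel k n) := by ring
    _ ≤ (6 * n + 1) * (1 / 4) ^ n := by gcongr

lemma summable_mul_quarter_pow : Summable (fun n : ℕ ↦ (6 * n + 1) * (1 / 4 : ℝ) ^ n) := by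
  have hr : ‖(1 / 4 : ℝ)‖ < 1 := by norm_num
  have hn := (summable_pow_mul_geometric_of_norm_lt_one 1 hr).mul_left 6
  simpa only [pow_one, add_mul, one_mul, mul_assoc] using
    hn.add (summable_geometric_of_norm_lt_one hr)

lemma tendsto_wzG (k : ℕ) : Tendsto (wzG k) atTop (𝓝 0) := by
  have h := (tendsto_self_mul_const_pow_of_lt_one (r := 1 / 4) (by norm_num)
    (by norm_num)).const_mul 8
  rw [mul_zero] at h
  refine squeeze_zero (fun n ↦ mul_nonneg (by positivity) (wzKernel_pos k n).le) (fun n ↦ ?_) h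
  rw [wzG, mul_assoc]
  gcongr
  exact wzKernel_le k n

lemma summable_wzF_zero : Summable (wzF 0) := by
  refine summable_mul_quarter_pow.of_nonneg_of_le (wzF_nonneg 0) fun n ↦ ?_
  unfold wzF
  simpa using mul_le_mul_of_nonneg_left (wzKernel_le 0 n) (by positivity : (0 : ℝ) ≤ 6 * n + 1)

lemma hasSum_wzF (k : ℕ) : HasSum (wzF k) (∑' n, wzF 0 n) := by
  induction k with
  | zero => exact summable_wzF_zero.hasSum
  | succ k ih =>
    rw [hasSum_iff_tendsto_nat_of_nonneg (wzF_nonneg _)] at ih ⊢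
    simpa [wzG] using ih.sum_range_of_sub_eq_sub_succ (wzF_succ_sub_wzF k) (tendsto_wzG k)

lemma wallis_W_mul_poch_half_sq (k : ℕ) :
    Real.Wallis.W k * (2 * k + 1) * poch (1 / 2) k ^ 2 = (k ! : ℝ) ^ 2 := by
  induction k with
  | zero => simp [Real.Wallis.W, poch]
  | succ k ih =>
    have hk := poch_pos (x := 1 / 2) (by norm_num) k
    rw [Real.Wallis.W_succ, poch_succ, factorial_succ, cast_mul, mul_pow _ (k ! : ℝ), ← ih]
    push_cast
    field_simp
    ring

lemma wzF_zero_right (k : ℕ) :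
    wzF k 0 = (1 + 4 * k) / (1 + 2 * k) * (Real.Wallis.W k)⁻¹ := by
  have hk := poch_pos (x := 1 / 2) (by norm_num) k
  have hW := Real.Wallis.W_pos k
  rw [wzF, wzKernel, zero_add, ← wallis_W_mul_poch_half_sq]
  simp only [CharP.cast_eq_zero, poch, factorial_zero]
  field_simp
  ring

lemma tendsto_wzF_zero_right : Tendsto (fun k ↦ wzF k 0) atTop (𝓝 (4 / π)) := by
  have hratio := tendsto_add_mul_div_add_mul_atTop_nhds (1 : ℝ) 1 4 (d := 2) two_ne_zero
  have hwallis := Real.Wallis.tendsto_W_nhds_pi_div_two.inv₀ (by positivity)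
  convert hratio.mul hwallis using 2
  · exact wzF_zero_right _
  · field_simp

lemma eq_four_div_pi_of_hasSum_wzF {s : ℝ} (h : ∀ k, HasSum (wzF k) s) : s = 4 / π := by
  set u : ℕ → ℝ := fun n ↦ (6 * (n + 1 : ℕ) + 1) * (1 / 4) ^ (n + 1)
  have hu : Summable u := (summable_nat_add_iff 1).2 summable_mul_quarter_pow
  have hk (k : ℕ) : HasSum (fun n ↦ wzF k (n + 1)) (s - wzF k 0) := by
    simpa using (hasSum_nat_add_iff' 1).2 (h k)
  have htail (k : ℕ) : s - wzF k 0 ≤ (∑' n, u n) / (k + 1) := by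
    rw [← tsum_div_const]
    exact hasSum_le (fun n ↦ wzF_le (by omega) k) (hk k) (hu.div_const _).hasSum
  have hlim : Tendsto (fun k : ℕ ↦ (∑' n, u n) / (k + 1)) atTop (𝓝 0) := by
    simpa [div_eq_mul_one_div (∑' n, u n)] using
      tendsto_one_div_add_atTop_nhds_zero_nat.const_mul (∑' n, u n)
  have hgap : Tendsto (fun k ↦ s - wzF k 0) atTop (𝓝 0) :=
    squeeze_zero (fun k ↦ (hk k).nonneg fun n ↦ wzF_nonneg k (n + 1)) htail hlim
  have hconv : Tendsto (fun k ↦ wzF k 0) atTop (𝓝 s) := by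
    simpa using (tendsto_const_nhds (x := s)).sub hgap
  exact tendsto_nhds_unique hconv tendsto_wzF_zero_right

end Guillera

open Guillera in
theorem stmt_2 :
    Filter.Tendsto (fun N => ∑ n ∈ Finset.range N,
      (1/4 : ℝ)^n * (poch (1/2) n)^3 / (poch 1 n)^3 * (6*(n:ℝ)+1))
      Filter.atTop (nhds (4 / Real.pi)) := by
  have hsum := hasSum_wzF 0
  rw [eq_four_div_pi_of_hasSum_wzF hasSum_wzF] at hsum
  refine hsum.tendsto_sum_nat.congr fun N ↦ Finset.sum_congr rfl fun n _ ↦ ?_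
  rw [wzF, wzKernel, poch_one, one_div_pow]
  simp only [poch, add_zero, CharP.cast_eq_zero, mul_zero]
  field_simp
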